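/- Let G be a finite graph. If {x̄_v ∈ R^N : v ∈ V} is an orthonormal representation of the complement of G with handle h̄ (a unit vector), then for any positive integer d, the graph G ⋉ K̄_d (each vertex of G blown up into d pairwise non-adjacent copies) satisfies: the Lovász theta function obeys θ(G ⋉ K̄_d) ≥ d · Σ_{v∈V} ⟨x̄_v, h̄⟩². In particular θ(G ⋉ K̄_d) = d · θ(G), and hence inf_d θ(G ⋉ K̄_d)/d = θ(G). -/

import Mathlib

open SimpleGraph

/-!
Copying each vector of an orthonormal representation of `Ḡ` `d` times gives one of the
complement of `G ⋉ K̄_d` with `d` times the value, so `θ(G ⋉ K̄_d) ≥ d θ(G)`. Conversely, given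
an orthonormal representation `y` of the complement of `G ⋉ K̄_d` with handle `h`, replace the
fibre `y_{v,1}, …, y_{v,d}` over `v` by the normalization `x_v` of `∑ᵢ ⟪y_{v,i}, h⟫ y_{v,i}`.
Fibres over adjacent vertices span orthogonal subspaces, so `x` is an orthonormal
representation of `Ḡ`, and Cauchy–Schwarz gives `∑ᵢ ⟪y_{v,i}, h⟫² ≤ d ⟪x_v, h⟫²`.
-/

/-- The lexicographic product of two simple graphs. -/
def lexProd {α β : Type*} (G : SimpleGraph α) (H : SimpleGraph β) :
    SimpleGraph (α × β) where
  Adj x y := G.Adj x.1 y.1 ∨ (x.1 = y.1 ∧ H.Adj x.2 y.2)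
  symm := by
    constructor
    rintro ⟨u, a⟩ ⟨v, b⟩ (h | ⟨h1, h2⟩)
    · exact Or.inl h.symm
    · exact Or.inr ⟨h1.symm, h2.symm⟩
  loopless := by constructor; rintro ⟨u, a⟩ (h | ⟨_, h⟩) <;> exact h.ne rfl

/-- The Lovász theta function of `G`, in its dual form: the supremum of
`∑_v ⟪x̄_v, h̄⟫²` over orthonormal representations of the complement of `G`
and unit handles `h̄`. -/
noncomputable def lovaszTheta {V : Type*} [Fintype V] (G : SimpleGraph V) : ℝ :=
  sSup {x : ℝ | ∃ (N : ℕ) (f : V → EuclideanSpace ℝ (Fin N))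
      (h : EuclideanSpace ℝ (Fin N)),
    ‖h‖ = 1 ∧ (∀ v, ‖f v‖ = 1) ∧
    (∀ u v : V, G.Adj u v → (inner ℝ (f u) (f v) : ℝ) = 0) ∧
    x = ∑ v, (inner ℝ (f v) h : ℝ) ^ 2}

open scoped InnerProductSpace

section UnitCombination

variable {E : Type*} [NormedAddCommGroup E] [InnerProductSpace ℝ E] {ι : Type*} [Fintype ι]

lemma norm_sum_smul_sq_le_card_mul {y : ι → E} (hy : ∀ i, ‖y i‖ = 1) (c : ι → ℝ) :
    ‖∑ i, c i • y i‖ ^ 2 ≤ Fintype.card ι * ∑ i, c i ^ 2 :=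
  calc ‖∑ i, c i • y i‖ ^ 2 ≤ (∑ i, |c i|) ^ 2 := by
        gcongr
        exact (norm_sum_le _ _).trans_eq (by simp [norm_smul, hy])
    _ ≤ Fintype.card ι * ∑ i, |c i| ^ 2 := sq_sum_le_card_mul_sum_sq
    _ = Fintype.card ι * ∑ i, c i ^ 2 := by simp only [sq_abs]

lemma exists_norm_eq_one_mem_span_sum_inner_sq_le [Nonempty ι] {y : ι → E}
    (hy : ∀ i, ‖y i‖ = 1) (h : E) :
    ∃ u ∈ Submodule.span ℝ (Set.range y), ‖u‖ = 1 ∧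
      ∑ i, ⟪y i, h⟫_ℝ ^ 2 ≤ Fintype.card ι * ⟪u, h⟫_ℝ ^ 2 := by
  set S := ∑ i, ⟪y i, h⟫_ℝ ^ 2
  set w := ∑ i, ⟪y i, h⟫_ℝ • y i
  have hw_mem : w ∈ Submodule.span ℝ (Set.range y) :=
    Submodule.sum_mem _ fun i _ => Submodule.smul_mem _ _ (Submodule.subset_span ⟨i, rfl⟩)
  have hwh : ⟪w, h⟫_ℝ = S := by simp only [w, S, sum_inner, real_inner_smul_left, sq]
  have hS_nonneg : 0 ≤ S := by positivity
  rcases hS_nonneg.eq_or_lt with hS | hS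
  · obtain ⟨i⟩ := ‹Nonempty ι›
    exact ⟨y i, Submodule.subset_span ⟨i, rfl⟩, hy i, by rw [← hS]; positivity⟩
  · have hw : 0 < ‖w‖ := norm_pos_iff.2 fun hw => by
      rw [hw, inner_zero_left] at hwh
      exact hS.ne hwh
    refine ⟨‖w‖⁻¹ • w, Submodule.smul_mem _ _ hw_mem, by simp [norm_smul, hw.ne'], ?_⟩
    rw [real_inner_smul_left, hwh, mul_pow, inv_pow, ← div_eq_inv_mul, mul_div_assoc',
      le_div_iff₀ (by positivity)]
    calc S * ‖w‖ ^ 2 ≤ S * (Fintype.card ι * S) := by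
          gcongr
          exact norm_sum_smul_sq_le_card_mul hy _
      _ = Fintype.card ι * S ^ 2 := by ring

end UnitCombination

section Theta

variable {V : Type*} [Fintype V]

def thetaValues (G : SimpleGraph V) : Set ℝ :=
  {x : ℝ | ∃ (N : ℕ) (f : V → EuclideanSpace ℝ (Fin N)) (h : EuclideanSpace ℝ (Fin N)),
    ‖h‖ = 1 ∧ (∀ v, ‖f v‖ = 1) ∧
    (∀ u v : V, G.Adj u v → (inner ℝ (f u) (f v) : ℝ) = 0) ∧
    x = ∑ v, (inner ℝ (f v) h : ℝ) ^ 2}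

lemma lovaszTheta_eq_sSup_thetaValues (G : SimpleGraph V) :
    lovaszTheta G = sSup (thetaValues G) := rfl

lemma thetaValues_nonempty (G : SimpleGraph V) : (thetaValues G).Nonempty := by
  classical
  set b := fun i : Fin (Fintype.card V + 1) => EuclideanSpace.single i (1 : ℝ)
  have hb : Orthonormal ℝ b := EuclideanSpace.orthonormal_single
  have hf : Orthonormal ℝ (b ∘ Fin.castSucc ∘ Fintype.equivFin V) :=
    hb.comp _ ((Fin.castSucc_injective _).comp (Fintype.equivFin V).injective)
  exact ⟨_, _, _, b (Fin.last _), hb.1 _, hf.1, fun u v huv => hf.2 huv.ne, rfl⟩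

lemma thetaValues_bddAbove (G : SimpleGraph V) : BddAbove (thetaValues G) := by
  refine ⟨Fintype.card V, ?_⟩
  rintro _ ⟨N, f, h, hh, hf, -, rfl⟩
  calc ∑ v, ⟪f v, h⟫_ℝ ^ 2 ≤ ∑ _v : V, (1 : ℝ) := by
        gcongr with v
        rw [sq_le_one_iff_abs_le_one]
        simpa [hf v, hh] using abs_real_inner_le_norm (f v) h
    _ = Fintype.card V := by simp

lemma mul_mem_thetaValues_lexProd_bot {G : SimpleGraph V} {x : ℝ} (hx : x ∈ thetaValues G)
    (d : ℕ) : (d : ℝ) * x ∈ thetaValues (lexProd G (⊥ : SimpleGraph (Fin d))) := by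
  obtain ⟨N, f, h, hh, hf, horth, rfl⟩ := hx
  refine ⟨N, fun p => f p.1, h, hh, fun p => hf p.1, ?_, ?_⟩
  · rintro ⟨u, i⟩ ⟨v, j⟩ (huv | ⟨-, hbot⟩)
    · exact horth u v huv
    · exact ((bot_adj _ _).mp hbot).elim
  · simp [Fintype.sum_prod_type, Finset.mul_sum]

lemma exists_mem_thetaValues_le_mul_of_mem_lexProd_bot {G : SimpleGraph V} {d : ℕ} (hd : 0 < d)
    {x : ℝ} (hx : x ∈ thetaValues (lexProd G (⊥ : SimpleGraph (Fin d)))) :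
    ∃ x' ∈ thetaValues G, x ≤ d * x' := by
  obtain ⟨N, y, h, hh, hy, horth, rfl⟩ := hx
  have : Nonempty (Fin d) := ⟨⟨0, hd⟩⟩
  choose f hf_mem hf hle using
    fun v => exists_norm_eq_one_mem_span_sum_inner_sq_le (fun i => hy (v, i)) h
  refine ⟨∑ v, ⟪f v, h⟫_ℝ ^ 2, ⟨N, f, h, hh, hf, fun u v huv => ?_, rfl⟩, ?_⟩
  · refine (Submodule.isOrtho_span.2 ?_).inner_eq (hf_mem u) (hf_mem v)
    rintro _ ⟨i, rfl⟩ _ ⟨j, rfl⟩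
    exact horth (u, i) (v, j) (Or.inl huv)
  · calc ∑ p, ⟪y p, h⟫_ℝ ^ 2 = ∑ v, ∑ i, ⟪y (v, i), h⟫_ℝ ^ 2 := Fintype.sum_prod_type _
      _ ≤ ∑ v, d * ⟪f v, h⟫_ℝ ^ 2 := by
          gcongr with v
          simpa using hle v
      _ = d * ∑ v, ⟪f v, h⟫_ℝ ^ 2 := (Finset.mul_sum _ _ _).symm

lemma lovaszTheta_lexProd_bot (G : SimpleGraph V) {d : ℕ} (hd : 0 < d) :
    lovaszTheta (lexProd G (⊥ : SimpleGraph (Fin d))) = d * lovaszTheta G := by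
  rw [lovaszTheta_eq_sSup_thetaValues, lovaszTheta_eq_sSup_thetaValues]
  apply le_antisymm
  · refine csSup_le (thetaValues_nonempty _) fun x hx => ?_
    obtain ⟨x', hx', hle⟩ := exists_mem_thetaValues_le_mul_of_mem_lexProd_bot hd hx
    exact hle.trans (by gcongr; exact le_csSup (thetaValues_bddAbove G) hx')
  · rw [← smul_eq_mul, ← Real.sSup_smul_of_nonneg d.cast_nonneg]
    refine csSup_le_csSup (thetaValues_bddAbove _) (thetaValues_nonempty G).smul_set ?_
    rintro _ ⟨x, hx, rfl⟩
    exact mul_mem_thetaValues_lexProd_bot hx d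

end Theta

theorem stmt17 {V : Type*} [Fintype V] (G : SimpleGraph V)
    (N : ℕ) (f : V → EuclideanSpace ℝ (Fin N)) (h : EuclideanSpace ℝ (Fin N))
    (hh : ‖h‖ = 1) (hf : ∀ v, ‖f v‖ = 1)
    (horth : ∀ u v : V, G.Adj u v → (inner ℝ (f u) (f v) : ℝ) = 0)
    (d : ℕ) (hd : 0 < d) :
    (d : ℝ) * ∑ v, (inner ℝ (f v) h : ℝ) ^ 2 ≤
        lovaszTheta (lexProd G (⊥ : SimpleGraph (Fin d))) ∧
    lovaszTheta (lexProd G (⊥ : SimpleGraph (Fin d))) = d * lovaszTheta G ∧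
    sInf {x : ℝ | ∃ e : ℕ, 0 < e ∧
        x = lovaszTheta (lexProd G (⊥ : SimpleGraph (Fin e))) / e} =
      lovaszTheta G := by
  refine ⟨le_csSup (thetaValues_bddAbove _)
      (mul_mem_thetaValues_lexProd_bot ⟨N, f, h, hh, hf, horth, rfl⟩ d),
    lovaszTheta_lexProd_bot G hd, ?_⟩
  have hratios : {x : ℝ | ∃ e : ℕ, 0 < e ∧
      x = lovaszTheta (lexProd G (⊥ : SimpleGraph (Fin e))) / e} = {lovaszTheta G} := by
    ext x
    constructor
    · rintro ⟨e, he, rfl⟩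
      rw [Set.mem_singleton_iff, lovaszTheta_lexProd_bot G he,
        mul_div_cancel_left₀ _ (Nat.cast_ne_zero.2 he.ne')]
    · rintro rfl
      exact ⟨1, one_pos, by simp [lovaszTheta_lexProd_bot G one_pos]⟩
  rw [hratios, csInf_singleton]
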